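/- arXiv:2309.12584 — 2 statements merged into one kernel-verified Lean document; each statement's English description precedes it below -/
import Mathlib

section
/- (Theorem 1, non-increasing part.) Under any csmGmm, for every dimension k ∈ {1,...,K} and every choice of the remaining coordinates, the local false discovery rate is non-increasing in the k-th coordinate on the non-negative half-line: if z, z' ∈ ℝ^K satisfy z_{k'} = z'_{k'} for all k' ≠ k and 0 ≤ z_k ≤ z'_k, then lfdr(z') ≤ lfdr(z). -/
noncomputable section

open Finset

/-- The standard normal density `φ(x) = (2π)^{-1/2} exp(-x²/2)`. -/
def stdNormal (x : ℝ) : ℝ := (Real.sqrt (2 * Real.pi))⁻¹ * Real.exp (-(x ^ 2) / 2)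

/-- Sign value encoded by a ternary digit: `0 ↦ -1`, `1 ↦ 0`, `2 ↦ 1`. -/
def sgnVal (i : Fin 3) : ℝ := (i : ℝ) - 1

/-- The non-null pattern (binary representation) of an association configuration:
`pat h k = true` iff dimension `k` is non-null. -/
def pat {K : ℕ} (h : Fin K → Fin 3) : Fin K → Bool := fun k => h k != 1

/-- A conditionally symmetric multidimensional Gaussian mixture model (csmGmm).
Parameters are indexed by the non-null pattern `β : Fin K → Bool`, which is
equivalent to the binary representation `b ∈ {0,…,2^K - 1}`; the all-`true`
pattern corresponds to `b = 2^K - 1`. -/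
structure CsmGmm (K : ℕ) where
  /-- number of mean-magnitude vectors for each binary representation -/
  M : (Fin K → Bool) → ℕ
  M_pos : ∀ β, 1 ≤ M β
  /-- mixing proportions, shared by configurations with the same binary representation -/
  pi : (β : Fin K → Bool) → Fin (M β) → ℝ
  pi_pos : ∀ β m, 0 < pi β m
  pi_sum : ∑ h : Fin K → Fin 3, ∑ m : Fin (M (pat h)), pi (pat h) m = 1
  /-- mean magnitudes -/
  mu : (β : Fin K → Bool) → Fin (M β) → Fin K → ℝ
  mu_null : ∀ β m k, β k = false → mu β m k = 0
  mu_pos : ∀ β m k, β k = true → 0 < mu β m k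
  mu_alt : ∀ β (m' : Fin (M β)) (m : Fin (M (fun _ => true))) k,
    β ≠ (fun _ => true) → β k = true → mu β m' k ≤ mu (fun _ => true) m k

namespace CsmGmm

variable {K : ℕ}

/-- The numerator `N(z)`: mixture mass over composite-null configurations
(those with at least one null dimension, i.e. some `h k = 0`, encoded by digit `1`). -/
def N (G : CsmGmm K) (z : Fin K → ℝ) : ℝ :=
  ∑ h ∈ Finset.univ.filter (fun h : Fin K → Fin 3 => ∃ k, h k = 1),
    ∑ m : Fin (G.M (pat h)),
      G.pi (pat h) m * ∏ k, stdNormal (z k - sgnVal (h k) * G.mu (pat h) m k)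

/-- The denominator `D(z)`: the full mixture density. -/
def D (G : CsmGmm K) (z : Fin K → ℝ) : ℝ :=
  ∑ h : Fin K → Fin 3,
    ∑ m : Fin (G.M (pat h)),
      G.pi (pat h) m * ∏ k, stdNormal (z k - sgnVal (h k) * G.mu (pat h) m k)

/-- The local false discovery rate `lfdr(z) = N(z)/D(z)`. -/
def lfdr (G : CsmGmm K) (z : Fin K → ℝ) : ℝ := G.N z / G.D z

end CsmGmm

end

/- ======================= auxiliary material ======================= -/

noncomputable section AuxLfdr

open Finset

section Analytic

lemma stdNormal_pos' (x : ℝ) : 0 < stdNormal x := by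
  unfold stdNormal
  positivity

lemma pair_eq' (t a : ℝ) :
    stdNormal (t - a) + stdNormal (t + a)
      = (Real.sqrt (2*Real.pi))⁻¹ * Real.exp (-(t^2)/2) * Real.exp (-(a^2)/2)
          * (2 * Real.cosh (t*a)) := by
  unfold stdNormal
  rw [Real.cosh_eq,
      show -(t-a)^2/2 = (-(t^2)/2 + -(a^2)/2) + t*a by ring,
      show -(t+a)^2/2 = (-(t^2)/2 + -(a^2)/2) + -(t*a) by ring,
      Real.exp_add]
  simp only [Real.exp_add]
  ring

lemma cosh_core' {t t' μ ν : ℝ} (h0 : 0 ≤ t) (h1 : t ≤ t') (hμ : 0 ≤ μ) (hμν : μ ≤ ν) :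
    Real.cosh (t' * μ) * Real.cosh (t * ν) ≤ Real.cosh (t * μ) * Real.cosh (t' * ν) := by
  have ht' : 0 ≤ t' := h0.trans h1
  have hν : 0 ≤ ν := hμ.trans hμν
  have e1 : ∀ a b : ℝ, 2 * (Real.cosh a * Real.cosh b) = Real.cosh (a+b) + Real.cosh (a-b) := by
    intro a b; rw [Real.cosh_add, Real.cosh_sub]; ring
  have h2 : Real.cosh (t'*μ + t*ν) ≤ Real.cosh (t*μ + t'*ν) := by
    rw [Real.cosh_le_cosh]
    rw [abs_of_nonneg (by positivity), abs_of_nonneg (by positivity)]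
    nlinarith
  have h3 : Real.cosh (t'*μ - t*ν) ≤ Real.cosh (t*μ - t'*ν) := by
    rw [Real.cosh_le_cosh]
    rw [abs_le]
    constructor <;> cases' abs_cases (t*μ - t'*ν) with hc hc <;>
      rw [hc.1] <;> nlinarith
  nlinarith [e1 (t'*μ) (t*ν), e1 (t*μ) (t'*ν)]

lemma pair_key' {t t' e f : ℝ} (h0 : 0 ≤ t) (h1 : t ≤ t') (hef : |e| ≤ |f|) :
    (stdNormal (t' - e) + stdNormal (t' + e)) * (stdNormal (t - f) + stdNormal (t + f))
      ≤ (stdNormal (t - e) + stdNormal (t + e)) * (stdNormal (t' - f) + stdNormal (t' + f)) := by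
  have ht' : 0 ≤ t' := h0.trans h1
  have hc : Real.cosh (t' * e) * Real.cosh (t * f) ≤ Real.cosh (t * e) * Real.cosh (t' * f) := by
    have r1 : ∀ s x : ℝ, 0 ≤ s → Real.cosh (s * x) = Real.cosh (s * |x|) := by
      intro s x hs
      rw [← Real.cosh_abs (s*x), abs_mul, abs_of_nonneg hs]
    rw [r1 t' e ht', r1 t f h0, r1 t e h0, r1 t' f ht']
    exact cosh_core' h0 h1 (abs_nonneg e) hef
  rw [pair_eq', pair_eq', pair_eq', pair_eq']
  set c := (Real.sqrt (2*Real.pi))⁻¹ with hcdef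
  have hcpos : 0 < c := by rw [hcdef]; positivity
  have P : (0:ℝ) ≤ c^2 * (Real.exp (-(t^2)/2) * Real.exp (-(t'^2)/2)
      * Real.exp (-(e^2)/2) * Real.exp (-(f^2)/2)) * 4 := by positivity
  calc c * Real.exp (-(t'^2)/2) * Real.exp (-(e^2)/2) * (2 * Real.cosh (t'*e))
        * (c * Real.exp (-(t^2)/2) * Real.exp (-(f^2)/2) * (2 * Real.cosh (t*f)))
      = (c^2 * (Real.exp (-(t^2)/2) * Real.exp (-(t'^2)/2)
          * Real.exp (-(e^2)/2) * Real.exp (-(f^2)/2)) * 4)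
        * (Real.cosh (t'*e) * Real.cosh (t*f)) := by ring
    _ ≤ (c^2 * (Real.exp (-(t^2)/2) * Real.exp (-(t'^2)/2)
          * Real.exp (-(e^2)/2) * Real.exp (-(f^2)/2)) * 4)
        * (Real.cosh (t*e) * Real.cosh (t'*f)) := mul_le_mul_of_nonneg_left hc P
    _ = c * Real.exp (-(t^2)/2) * Real.exp (-(e^2)/2) * (2 * Real.cosh (t*e))
        * (c * Real.exp (-(t'^2)/2) * Real.exp (-(f^2)/2) * (2 * Real.cosh (t'*f))) := by ring

lemma sum_pair_key' {ι κ : Type*} [Fintype ι] [Fintype κ] (c : ι → ℝ) (d : κ → ℝ)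
    (e : ι → ℝ) (f : κ → ℝ) (hc : ∀ m, 0 ≤ c m) (hd : ∀ n, 0 ≤ d n)
    (hef : ∀ m n, |e m| ≤ |f n|) {t t' : ℝ} (h0 : 0 ≤ t) (h1 : t ≤ t') :
    (∑ m, c m * (stdNormal (t' - e m) + stdNormal (t' + e m))) *
    (∑ n, d n * (stdNormal (t - f n) + stdNormal (t + f n)))
      ≤ (∑ m, c m * (stdNormal (t - e m) + stdNormal (t + e m))) *
        (∑ n, d n * (stdNormal (t' - f n) + stdNormal (t' + f n))) := by
  rw [Finset.sum_mul_sum, Finset.sum_mul_sum]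
  refine Finset.sum_le_sum fun m _ => Finset.sum_le_sum fun n _ => ?_
  calc c m * (stdNormal (t' - e m) + stdNormal (t' + e m))
        * (d n * (stdNormal (t - f n) + stdNormal (t + f n)))
      = (c m * d n) * ((stdNormal (t' - e m) + stdNormal (t' + e m))
          * (stdNormal (t - f n) + stdNormal (t + f n))) := by ring
    _ ≤ (c m * d n) * ((stdNormal (t - e m) + stdNormal (t + e m))
          * (stdNormal (t' - f n) + stdNormal (t' + f n))) :=
        mul_le_mul_of_nonneg_left (pair_key' h0 h1 (hef m n)) (mul_nonneg (hc m) (hd n))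
    _ = c m * (stdNormal (t - e m) + stdNormal (t + e m))
        * (d n * (stdNormal (t' - f n) + stdNormal (t' + f n))) := by ring

end Analytic

section Combinatorial

def flipk {K : ℕ} (k : Fin K) (h : Fin K → Fin 3) : Fin K → Fin 3 :=
  Function.update h k (2 - h k)

lemma flipk_apply_ne {K : ℕ} (k : Fin K) (h : Fin K → Fin 3) (k' : Fin K) (hk : k' ≠ k) :
    flipk k h k' = h k' := Function.update_of_ne hk _ _

lemma flipk_apply {K : ℕ} (k : Fin K) (h : Fin K → Fin 3) : flipk k h k = 2 - h k :=
  Function.update_self _ _ _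

lemma sub_sub_cancel3 (i : Fin 3) : 2 - (2 - i) = i := by revert i; decide

lemma flipk_flipk {K : ℕ} (k : Fin K) (h : Fin K → Fin 3) : flipk k (flipk k h) = h := by
  funext k'
  by_cases hk : k' = k
  · rw [hk, flipk_apply, flipk_apply, sub_sub_cancel3]
  · rw [flipk_apply_ne _ _ _ hk, flipk_apply_ne _ _ _ hk]

lemma flip3_ne_one (i : Fin 3) : (2 - i = 1) = (i = 1) := by revert i; decide

lemma pat_flipk {K : ℕ} (k : Fin K) (h : Fin K → Fin 3) : pat (flipk k h) = pat h := by
  funext k'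
  show (flipk k h k' != 1) = (h k' != 1)
  by_cases hk : k' = k
  · rw [hk, flipk_apply]
    generalize h k = i
    revert i; decide
  · rw [flipk_apply_ne _ _ _ hk]

lemma flipk_one_iff {K : ℕ} (k : Fin K) (h : Fin K → Fin 3) (k' : Fin K) :
    flipk k h k' = 1 ↔ h k' = 1 := by
  by_cases hk : k' = k
  · rw [hk, flipk_apply, flip3_ne_one]
  · rw [flipk_apply_ne _ _ _ hk]

lemma sgnVal_flip (i : Fin 3) : sgnVal (2 - i) = -(sgnVal i) := by
  fin_cases i <;> simp [sgnVal] <;> norm_num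

lemma abs_sgnVal_le (i : Fin 3) : |sgnVal i| ≤ 1 := by
  fin_cases i <;> simp [sgnVal] <;> norm_num

lemma abs_sgnVal_of_ne (i : Fin 3) (hi : i ≠ 1) : |sgnVal i| = 1 := by
  fin_cases i <;> simp_all [sgnVal] <;> norm_num

/-- The contribution of a single configuration `h`, with parameters drawn from pattern `β`. -/
def termS {K : ℕ} (G : CsmGmm K) (β : Fin K → Bool) (h : Fin K → Fin 3) (z : Fin K → ℝ) : ℝ :=
  ∑ m : Fin (G.M β), G.pi β m * ∏ k, stdNormal (z k - sgnVal (h k) * G.mu β m k)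

lemma termS_pos {K : ℕ} (G : CsmGmm K) (β : Fin K → Bool) (h : Fin K → Fin 3)
    (w : Fin K → ℝ) : 0 < termS G β h w := by
  refine Finset.sum_pos (fun m _ => mul_pos (G.pi_pos β m)
    (Finset.prod_pos fun k' _ => stdNormal_pos' _)) ⟨⟨0, G.M_pos β⟩, Finset.mem_univ _⟩

lemma mu_alt' {K : ℕ} (G : CsmGmm K) (β β' : Fin K → Bool) (m : Fin (G.M β))
    (n : Fin (G.M β')) (k : Fin K) (hβ' : β' = fun _ => true) (hne : β ≠ fun _ => true)
    (hk : β k = true) : G.mu β m k ≤ G.mu β' n k := by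
  subst hβ'; exact G.mu_alt β m n k hne hk

lemma termS_pair' {K : ℕ} (G : CsmGmm K) (β : Fin K → Bool) (h : Fin K → Fin 3) (k : Fin K)
    (w u : Fin K → ℝ) (hagree : ∀ k', k' ≠ k → u k' = w k') :
    termS G β h w + termS G β (flipk k h) w
      = ∑ m : Fin (G.M β),
          (G.pi β m * ∏ k' ∈ Finset.univ.erase k, stdNormal (u k' - sgnVal (h k') * G.mu β m k'))
            * (stdNormal (w k - sgnVal (h k) * G.mu β m k)
               + stdNormal (w k + sgnVal (h k) * G.mu β m k)) := by
  unfold termS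
  rw [← Finset.sum_add_distrib]
  refine Finset.sum_congr rfl fun m _ => ?_
  have h1 : ∀ (h' : Fin K → Fin 3), ∏ k', stdNormal (w k' - sgnVal (h' k') * G.mu β m k')
      = (∏ k' ∈ Finset.univ.erase k, stdNormal (w k' - sgnVal (h' k') * G.mu β m k'))
        * stdNormal (w k - sgnVal (h' k) * G.mu β m k) :=
    fun h' => (Finset.prod_erase_mul Finset.univ _ (Finset.mem_univ k)).symm
  rw [h1 h, h1 (flipk k h)]
  have h2 : ∏ k' ∈ Finset.univ.erase k, stdNormal (w k' - sgnVal (flipk k h k') * G.mu β m k')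
      = ∏ k' ∈ Finset.univ.erase k, stdNormal (u k' - sgnVal (h k') * G.mu β m k') := by
    refine Finset.prod_congr rfl fun k' hk' => ?_
    rw [flipk_apply_ne _ _ _ (Finset.mem_erase.1 hk').1, hagree k' (Finset.mem_erase.1 hk').1]
  have h3 : ∏ k' ∈ Finset.univ.erase k, stdNormal (w k' - sgnVal (h k') * G.mu β m k')
      = ∏ k' ∈ Finset.univ.erase k, stdNormal (u k' - sgnVal (h k') * G.mu β m k') := by
    refine Finset.prod_congr rfl fun k' hk' => ?_
    rw [hagree k' (Finset.mem_erase.1 hk').1]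
  have h4 : stdNormal (w k - sgnVal (flipk k h k) * G.mu β m k)
      = stdNormal (w k + sgnVal (h k) * G.mu β m k) := by
    rw [flipk_apply, sgnVal_flip, neg_mul, sub_neg_eq_add]
  rw [h2, h3, h4]; ring

end Combinatorial

end AuxLfdr

/-- **Theorem 1 (non-increasing part).** Under any csmGmm, for every dimension `k`
and every choice of the remaining coordinates, the lfdr is non-increasing in the
`k`-th coordinate on the non-negative half-line. -/
theorem csmGmm_lfdr_nonincreasing_on_nonneg {K : ℕ} (hK : 2 ≤ K) (G : CsmGmm K)
    (k : Fin K) (z z' : Fin K → ℝ)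
    (hfix : ∀ k', k' ≠ k → z k' = z' k')
    (h0 : 0 ≤ z k) (hle : z k ≤ z' k) :
    G.lfdr z' ≤ G.lfdr z := by
  classical
  set Tnull : Finset (Fin K → Fin 3) :=
    Finset.univ.filter (fun h : Fin K → Fin 3 => ∃ k', h k' = 1) with hTnull
  set Talt : Finset (Fin K → Fin 3) :=
    Finset.univ.filter (fun h : Fin K → Fin 3 => ¬ ∃ k', h k' = 1) with hTalt
  have hNdef : ∀ w, G.N w = ∑ h ∈ Tnull, termS G (pat h) h w := fun w => rfl
  have hDdef : ∀ w, G.D w = ∑ h : Fin K → Fin 3, termS G (pat h) h w := fun w => rfl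
  set A : (Fin K → ℝ) → ℝ := fun w => ∑ h ∈ Talt, termS G (pat h) h w with hAdef
  have hDNA : ∀ w, G.D w = G.N w + A w := by
    intro w
    rw [hDdef, hNdef, hAdef]
    exact (Finset.sum_filter_add_sum_filter_not Finset.univ _ _).symm
  have hDpos : ∀ w, 0 < G.D w := by
    intro w
    rw [hDdef]
    exact Finset.sum_pos (fun h _ => termS_pos G (pat h) h w) Finset.univ_nonempty
  -- reindexing by the flip involution
  have hre : ∀ (s : Finset (Fin K → Fin 3)), (∀ h, h ∈ s → flipk k h ∈ s) →
      ∀ (F : (Fin K → Fin 3) → ℝ), ∑ h ∈ s, F (flipk k h) = ∑ h ∈ s, F h := by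
    intro s hs F
    exact Finset.sum_nbij' (flipk k) (flipk k) (fun a ha => hs a ha) (fun a ha => hs a ha)
      (fun a _ => flipk_flipk k a) (fun a _ => flipk_flipk k a) (fun a _ => rfl)
  have hmemnull : ∀ h, h ∈ Tnull → flipk k h ∈ Tnull := by
    intro h hh
    rw [hTnull, Finset.mem_filter] at hh ⊢
    obtain ⟨-, k', hk'⟩ := hh
    exact ⟨Finset.mem_univ _, k', (flipk_one_iff k h k').2 hk'⟩
  have hmemalt : ∀ h, h ∈ Talt → flipk k h ∈ Talt := by
    intro h hh
    rw [hTalt, Finset.mem_filter] at hh ⊢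
    refine ⟨Finset.mem_univ _, fun ⟨k', hk'⟩ => hh.2 ⟨k', (flipk_one_iff k h k').1 hk'⟩⟩
  have hflipterm : ∀ (h : Fin K → Fin 3) (w : Fin K → ℝ),
      termS G (pat h) (flipk k h) w = termS G (pat (flipk k h)) (flipk k h) w := by
    intro h w; rw [pat_flipk]
  have hpairsum : ∀ (s : Finset (Fin K → Fin 3)), (∀ h, h ∈ s → flipk k h ∈ s) →
      ∀ (w : Fin K → ℝ),
      ∑ h ∈ s, (termS G (pat h) h w + termS G (pat h) (flipk k h) w)
        = 2 * ∑ h ∈ s, termS G (pat h) h w := by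
    intro s hs w
    rw [Finset.sum_add_distrib]
    have : ∑ h ∈ s, termS G (pat h) (flipk k h) w = ∑ h ∈ s, termS G (pat h) h w := by
      calc ∑ h ∈ s, termS G (pat h) (flipk k h) w
          = ∑ h ∈ s, (fun h' => termS G (pat h') h' w) (flipk k h) :=
            Finset.sum_congr rfl fun h _ => hflipterm h w
        _ = ∑ h ∈ s, termS G (pat h) h w := hre s hs (fun h' => termS G (pat h') h' w)
    rw [this]; ring
  -- termwise inequality
  have hterm : ∀ h ∈ Tnull, ∀ g ∈ Talt,
      (termS G (pat h) h z' + termS G (pat h) (flipk k h) z') *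
      (termS G (pat g) g z + termS G (pat g) (flipk k g) z)
        ≤ (termS G (pat h) h z + termS G (pat h) (flipk k h) z) *
          (termS G (pat g) g z' + termS G (pat g) (flipk k g) z') := by
    intro h hh g hg
    rw [hTnull, Finset.mem_filter] at hh
    rw [hTalt, Finset.mem_filter] at hg
    have hgk : ∀ k', g k' ≠ 1 := by
      intro k' hk'
      exact hg.2 ⟨k', hk'⟩
    have hpatg : pat g = fun _ => true := by
      funext k'
      simp [pat, hgk k']
    have hpath : pat h ≠ fun _ => true := by
      obtain ⟨k₀, hk₀⟩ := hh.2
      intro heq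
      have := congrFun heq k₀
      simp [pat, hk₀] at this
    rw [termS_pair' G (pat h) h k z' z hfix, termS_pair' G (pat g) g k z z (fun _ _ => rfl),
        termS_pair' G (pat h) h k z z (fun _ _ => rfl), termS_pair' G (pat g) g k z' z hfix]
    refine sum_pair_key' _ _ _ _ (fun m => ?_) (fun n => ?_) (fun m n => ?_) h0 hle
    · exact le_of_lt (mul_pos (G.pi_pos _ m) (Finset.prod_pos fun _ _ => stdNormal_pos' _))
    · exact le_of_lt (mul_pos (G.pi_pos _ n) (Finset.prod_pos fun _ _ => stdNormal_pos' _))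
    · -- |e m| ≤ |f n|
      have hmug : 0 < G.mu (pat g) n k := G.mu_pos _ n k (by rw [hpatg])
      have hfabs : |sgnVal (g k) * G.mu (pat g) n k| = G.mu (pat g) n k := by
        rw [abs_mul, abs_sgnVal_of_ne (g k) (hgk k), abs_of_nonneg hmug.le, one_mul]
      rw [hfabs]
      cases hcase : pat h k with
      | false =>
        rw [G.mu_null (pat h) m k hcase, mul_zero, abs_zero]
        exact hmug.le
      | true =>
        have hmuh : 0 < G.mu (pat h) m k := G.mu_pos _ m k hcase
        have h1 : |sgnVal (h k) * G.mu (pat h) m k| ≤ G.mu (pat h) m k := by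
          rw [abs_mul, abs_of_nonneg hmuh.le]
          calc |sgnVal (h k)| * G.mu (pat h) m k ≤ 1 * G.mu (pat h) m k :=
              mul_le_mul_of_nonneg_right (abs_sgnVal_le _) hmuh.le
            _ = G.mu (pat h) m k := one_mul _
        exact h1.trans (mu_alt' G (pat h) (pat g) m n k hpatg hpath hcase)
  -- double sum inequality
  have hkey4 : (2 * G.N z') * (2 * A z) ≤ (2 * G.N z) * (2 * A z') := by
    rw [hNdef z', hNdef z, hAdef]
    simp only
    rw [← hpairsum Tnull hmemnull z', ← hpairsum Tnull hmemnull z,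
        ← hpairsum Talt hmemalt z, ← hpairsum Talt hmemalt z',
        Finset.sum_mul_sum, Finset.sum_mul_sum]
    exact Finset.sum_le_sum fun h hh => Finset.sum_le_sum fun g hg => hterm h hh g hg
  have hkey : G.N z' * A z ≤ G.N z * A z' := by nlinarith [hkey4]
  -- conclude
  rw [CsmGmm.lfdr, CsmGmm.lfdr, div_le_div_iff₀ (hDpos z') (hDpos z)]
  rw [hDNA z, hDNA z']
  nlinarith [hkey]
end

section
/- (Theorem 1, no incongruous results.) Under any csmGmm, if z, z' ∈ ℝ^K satisfy sign(z_k) = sign(z'_k) and |z_k| ≥ |z'_k| for every k = 1,...,K, then lfdr(z) ≤ lfdr(z'). In other words, a vector of test statistics that is componentwise at least as extreme as another vector, with matching signs in every dimension, never receives a strictly larger local false discovery rate. -/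
-- ===== Auxiliary development =====
noncomputable section Aux
open Finset

namespace CsmGmmAux

lemma stdNormal_pos (x : ℝ) : 0 < stdNormal x := by
  unfold stdNormal
  have h : 0 < Real.sqrt (2 * Real.pi) := Real.sqrt_pos.mpr (by positivity)
  positivity

lemma pairSum (x s : ℝ) :
    stdNormal (x - s) + stdNormal (x + s)
    = 2 * (Real.sqrt (2 * Real.pi))⁻¹ * Real.exp (-(x ^ 2 + s ^ 2) / 2) * Real.cosh (s * x) := by
  unfold stdNormal
  rw [Real.cosh_eq,
    show (-((x - s) ^ 2) / 2 : ℝ) = -(x ^ 2 + s ^ 2) / 2 + s * x by ring,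
    show (-((x + s) ^ 2) / 2 : ℝ) = -(x ^ 2 + s ^ 2) / 2 + -(s * x) by ring,
    Real.exp_add, Real.exp_add]
  ring

lemma cosh_mul_cosh (x y : ℝ) :
    Real.cosh x * Real.cosh y = (Real.cosh (x + y) + Real.cosh (x - y)) / 2 := by
  rw [Real.cosh_add, Real.cosh_sub]; ring

lemma coshIneq {a c u v : ℝ} (hc : 0 ≤ c) (hca : c ≤ a) (hv : 0 ≤ v) (huv : v ≤ u) :
    Real.cosh (a * v) * Real.cosh (c * u) ≤ Real.cosh (a * u) * Real.cosh (c * v) := by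
  have ha : 0 ≤ a := hc.trans hca
  have hu : 0 ≤ u := hv.trans huv
  rw [cosh_mul_cosh, cosh_mul_cosh]
  have h1 : Real.cosh (a * v + c * u) ≤ Real.cosh (a * u + c * v) := by
    rw [Real.cosh_le_cosh, abs_of_nonneg (by positivity), abs_of_nonneg (by positivity)]
    nlinarith
  have h2 : Real.cosh (a * v - c * u) ≤ Real.cosh (a * u - c * v) := by
    rw [Real.cosh_le_cosh, abs_of_nonneg (by nlinarith : (0:ℝ) ≤ a * u - c * v), abs_le]
    constructor <;> nlinarith
  linarith

lemma keyIneq {a c : ℝ} (u v : ℝ) (hc : 0 ≤ c) (hca : c ≤ a) (huv : |v| ≤ |u|) :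
    (stdNormal (v - a) + stdNormal (v + a)) * (stdNormal (u - c) + stdNormal (u + c)) ≤
    (stdNormal (u - a) + stdNormal (u + a)) * (stdNormal (v - c) + stdNormal (v + c)) := by
  have ha : 0 ≤ a := hc.trans hca
  have habs : ∀ t s : ℝ, 0 ≤ t → Real.cosh (t * |s|) = Real.cosh (t * s) := by
    intro t s ht
    rw [← Real.cosh_abs (t * s), abs_mul, abs_of_nonneg ht]
  have hcosh : Real.cosh (a * v) * Real.cosh (c * u) ≤ Real.cosh (a * u) * Real.cosh (c * v) := by
    have h := coshIneq hc hca (abs_nonneg v) huv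
    rwa [habs a v ha, habs c u hc, habs a u ha, habs c v hc] at h
  rw [pairSum v a, pairSum u c, pairSum u a, pairSum v c]
  have hE : Real.exp (-(v ^ 2 + a ^ 2) / 2) * Real.exp (-(u ^ 2 + c ^ 2) / 2)
      = Real.exp (-(u ^ 2 + a ^ 2) / 2) * Real.exp (-(v ^ 2 + c ^ 2) / 2) := by
    rw [← Real.exp_add, ← Real.exp_add]; ring_nf
  have hC : (0:ℝ) < (Real.sqrt (2 * Real.pi))⁻¹ := by
    have h : 0 < Real.sqrt (2 * Real.pi) := Real.sqrt_pos.mpr (by positivity)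
    positivity
  set C := (Real.sqrt (2 * Real.pi))⁻¹
  calc 2 * C * Real.exp (-(v ^ 2 + a ^ 2) / 2) * Real.cosh (a * v) *
        (2 * C * Real.exp (-(u ^ 2 + c ^ 2) / 2) * Real.cosh (c * u))
      = (2 * C) ^ 2 * (Real.exp (-(v ^ 2 + a ^ 2) / 2) * Real.exp (-(u ^ 2 + c ^ 2) / 2)) *
        (Real.cosh (a * v) * Real.cosh (c * u)) := by ring
    _ = (2 * C) ^ 2 * (Real.exp (-(u ^ 2 + a ^ 2) / 2) * Real.exp (-(v ^ 2 + c ^ 2) / 2)) *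
        (Real.cosh (a * v) * Real.cosh (c * u)) := by rw [hE]
    _ ≤ (2 * C) ^ 2 * (Real.exp (-(u ^ 2 + a ^ 2) / 2) * Real.exp (-(v ^ 2 + c ^ 2) / 2)) *
        (Real.cosh (a * u) * Real.cosh (c * v)) := by
        apply mul_le_mul_of_nonneg_left hcosh (by positivity)
    _ = 2 * C * Real.exp (-(u ^ 2 + a ^ 2) / 2) * Real.cosh (a * u) *
        (2 * C * Real.exp (-(v ^ 2 + c ^ 2) / 2) * Real.cosh (c * v)) := by ring

variable {K : ℕ}

def gfun (G : CsmGmm K) (β : Fin K → Bool) (m : Fin (G.M β)) (z : Fin K → ℝ) : ℝ :=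
  ∏ k, (if β k then stdNormal (z k - G.mu β m k) + stdNormal (z k + G.mu β m k)
        else stdNormal (z k))

def Sfun (G : CsmGmm K) (w : Fin K → ℝ) (β : Fin K → Bool) : ℝ :=
  ∑ m : Fin (G.M β), G.pi β m * gfun G β m w

lemma gfun_pos (G : CsmGmm K) (β) (m) (z) : 0 < gfun G β m z := by
  apply Finset.prod_pos
  intro k _
  split
  · exact add_pos (stdNormal_pos _) (stdNormal_pos _)
  · exact stdNormal_pos _

lemma Sfun_pos (G : CsmGmm K) (w : Fin K → ℝ) (β : Fin K → Bool) : 0 < Sfun G w β := by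
  have : Nonempty (Fin (G.M β)) := ⟨⟨0, G.M_pos β⟩⟩
  exact Finset.sum_pos (fun m _ => mul_pos (G.pi_pos β m) (gfun_pos G β m w))
    Finset.univ_nonempty

lemma filter_pat_eq (β : Fin K → Bool) :
    Finset.univ.filter (fun h : Fin K → Fin 3 => pat h = β)
    = Fintype.piFinset (fun k => if β k then ({0, 2} : Finset (Fin 3)) else {1}) := by
  have key : ∀ (b : Bool) (x : Fin 3),
      ((x != 1) = b ↔ x ∈ (if b then ({0, 2} : Finset (Fin 3)) else {1})) := by decide
  ext h
  simp only [Finset.mem_filter, Finset.mem_univ, true_and, Fintype.mem_piFinset,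
    funext_iff, pat]
  exact forall_congr' fun k => key (β k) (h k)

lemma sum_over_fiber (G : CsmGmm K) (z : Fin K → ℝ) (β : Fin K → Bool) (m : Fin (G.M β)) :
    ∑ h ∈ Finset.univ.filter (fun h : Fin K → Fin 3 => pat h = β),
      ∏ k, stdNormal (z k - sgnVal (h k) * G.mu β m k) = gfun G β m z := by
  rw [filter_pat_eq,
    ← Finset.prod_univ_sum (fun k => if β k then ({0, 2} : Finset (Fin 3)) else {1})
      (fun k i => stdNormal (z k - sgnVal i * G.mu β m k))]
  apply Finset.prod_congr rfl
  intro k _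
  cases hb : β k
  · simp only [hb, Bool.false_eq_true, if_false]
    rw [Finset.sum_singleton]
    norm_num [sgnVal]
  · simp only [hb, if_true]
    rw [show ({0, 2} : Finset (Fin 3)) = insert 0 {2} from rfl,
      Finset.sum_insert (by decide), Finset.sum_singleton,
      show z k - sgnVal 0 * G.mu β m k = z k + G.mu β m k by norm_num [sgnVal],
      show z k - sgnVal 2 * G.mu β m k = z k - G.mu β m k by norm_num [sgnVal]]
    ring

lemma fiber_eq (G : CsmGmm K) (z : Fin K → ℝ) (β : Fin K → Bool) :
    ∑ h ∈ Finset.univ.filter (fun h : Fin K → Fin 3 => pat h = β),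
      ∑ m : Fin (G.M (pat h)), G.pi (pat h) m *
        ∏ k, stdNormal (z k - sgnVal (h k) * G.mu (pat h) m k)
    = Sfun G z β := by
  have h1 : ∀ h ∈ Finset.univ.filter (fun h : Fin K → Fin 3 => pat h = β),
      (∑ m : Fin (G.M (pat h)), G.pi (pat h) m *
        ∏ k, stdNormal (z k - sgnVal (h k) * G.mu (pat h) m k))
      = ∑ m : Fin (G.M β), G.pi β m *
        ∏ k, stdNormal (z k - sgnVal (h k) * G.mu β m k) := by
    intro h hh
    rw [Finset.mem_filter] at hh
    have hh2 := hh.2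
    subst hh2
    rfl
  rw [Finset.sum_congr rfl h1, Finset.sum_comm]
  unfold Sfun
  apply Finset.sum_congr rfl
  intro m _
  rw [← Finset.mul_sum, sum_over_fiber]

lemma D_eq (G : CsmGmm K) (z : Fin K → ℝ) :
    G.D z = ∑ β : Fin K → Bool, Sfun G z β := by
  rw [CsmGmm.D, ← Finset.sum_fiberwise Finset.univ pat
    (fun h => ∑ m : Fin (G.M (pat h)), G.pi (pat h) m *
      ∏ k, stdNormal (z k - sgnVal (h k) * G.mu (pat h) m k))]
  exact Finset.sum_congr rfl fun β _ => fiber_eq G z β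

lemma N_eq (G : CsmGmm K) (z : Fin K → ℝ) :
    G.N z = ∑ β ∈ Finset.univ.filter (fun β : Fin K → Bool => β ≠ fun _ => true),
      Sfun G z β := by
  rw [CsmGmm.N]
  have hfe : (Finset.univ.filter (fun h : Fin K → Fin 3 => ∃ k, h k = 1))
      = Finset.univ.filter (fun h : Fin K → Fin 3 =>
          pat h ∈ Finset.univ.filter (fun β : Fin K → Bool => β ≠ fun _ => true)) := by
    apply Finset.filter_congr
    intro h _
    simp [pat, funext_iff]
  rw [hfe, ← Finset.sum_fiberwise_eq_sum_filter Finset.univ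
    (Finset.univ.filter (fun β : Fin K → Bool => β ≠ fun _ => true)) pat
    (fun h => ∑ m : Fin (G.M (pat h)), G.pi (pat h) m *
      ∏ k, stdNormal (z k - sgnVal (h k) * G.mu (pat h) m k))]
  exact Finset.sum_congr rfl fun β _ => fiber_eq G z β

lemma D_split (G : CsmGmm K) (z : Fin K → ℝ) :
    G.D z = G.N z + Sfun G z (fun _ => true) := by
  rw [D_eq, N_eq,
    ← Finset.sum_filter_add_sum_filter_not Finset.univ
      (fun β : Fin K → Bool => β ≠ fun _ => true) (Sfun G z)]
  congr 1
  rw [show Finset.univ.filter (fun β : Fin K → Bool => ¬ β ≠ fun _ => true)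
      = {fun _ => true} from by ext β; simp, Finset.sum_singleton]

end CsmGmmAux
end Aux

/-- **Theorem 1 (no incongruous results).** Under any csmGmm, if `z` is
componentwise at least as extreme as `z'` with matching signs in every
dimension, then `lfdr(z) ≤ lfdr(z')`. -/
theorem csmGmm_no_incongruous_results {K : ℕ} (hK : 2 ≤ K) (G : CsmGmm K)
    (z z' : Fin K → ℝ)
    (hsign : ∀ k, Real.sign (z k) = Real.sign (z' k))
    (habs : ∀ k, |z' k| ≤ |z k|) :
    G.lfdr z ≤ G.lfdr z' := by
  classical
  open CsmGmmAux in
  have hN_pos : ∀ w : Fin K → ℝ, 0 < G.N w := by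
    intro w
    rw [N_eq]
    apply Finset.sum_pos (fun β _ => Sfun_pos G w β)
    refine ⟨fun _ => false, ?_⟩
    simp only [Finset.mem_filter, Finset.mem_univ, true_and]
    intro hcon
    have := congrFun hcon ⟨0, by omega⟩
    simp at this
  have hD_pos : ∀ w : Fin K → ℝ, 0 < G.D w := by
    intro w
    rw [D_split]
    have := hN_pos w
    have := Sfun_pos G w (fun _ => true)
    linarith
  have hkey : ∀ (β : Fin K → Bool), β ≠ (fun _ => true) →
      ∀ (m' : Fin (G.M β)) (m : Fin (G.M (fun _ => true))),
      gfun G β m' z * gfun G (fun _ => true) m z' ≤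
      gfun G β m' z' * gfun G (fun _ => true) m z := by
    intro β hβ m' m
    unfold gfun
    rw [← Finset.prod_mul_distrib, ← Finset.prod_mul_distrib]
    apply Finset.prod_le_prod
    · intro k _
      apply mul_nonneg
      · split
        · exact (add_pos (stdNormal_pos _) (stdNormal_pos _)).le
        · exact (stdNormal_pos _).le
      · exact (add_pos (stdNormal_pos _) (stdNormal_pos _)).le
    · intro k _
      have ha : 0 < G.mu (fun _ => true) m k := G.mu_pos _ m k rfl
      simp only [if_true]
      cases hb : β k
      · simp only [hb, Bool.false_eq_true, if_false]
        have h := keyIneq (z k) (z' k) (le_refl (0:ℝ)) ha.le (habs k)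
        simp only [sub_zero, add_zero] at h
        linarith
      · simp only [hb, if_true]
        have hc : 0 < G.mu β m' k := G.mu_pos β m' k hb
        have hca : G.mu β m' k ≤ G.mu (fun _ => true) m k := G.mu_alt β m' m k hβ hb
        have h := keyIneq (z k) (z' k) hc.le hca (habs k)
        linarith
  have hcross : G.N z * Sfun G z' (fun _ => true) ≤ G.N z' * Sfun G z (fun _ => true) := by
    rw [N_eq, N_eq, Finset.sum_mul, Finset.sum_mul]
    apply Finset.sum_le_sum
    intro β hβmem
    rw [Finset.mem_filter] at hβmem
    unfold Sfun
    rw [Finset.sum_mul, Finset.sum_mul]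
    apply Finset.sum_le_sum
    intro m' _
    rw [Finset.mul_sum, Finset.mul_sum]
    apply Finset.sum_le_sum
    intro m _
    have h := hkey β hβmem.2 m' m
    have hπ : (0:ℝ) ≤ G.pi β m' * G.pi (fun _ => true) m :=
      mul_nonneg (G.pi_pos β m').le (G.pi_pos _ m).le
    have h2 := mul_le_mul_of_nonneg_left h hπ
    nlinarith [h2]
  rw [CsmGmm.lfdr, CsmGmm.lfdr, div_le_div_iff₀ (hD_pos z) (hD_pos z')]
  rw [D_split, D_split]
  nlinarith [hcross, hN_pos z, hN_pos z']
end
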